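/- arXiv:2306.07844 — 2 statements merged into one kernel-verified Lean document; each statement's English description precedes it below -/
import Mathlib

section
/- Let P ⊆ ℕ be ω-closed with 0 ∈ P and with at least two elements. Then every automorphism (bijective endomorphism) of the semigroup B_ω^𝓕 (𝓕 = {[p) : p ∈ P}) is the identity map. -/
/-- A set `P ⊆ ℕ` of left endpoints encodes an ω-closed family
`𝓕 = {[p) : p ∈ P}` of nonempty inductive subsets of ω iff
`max p₁ (p₂ ∸ n) ∈ P` for all `p₁, p₂ ∈ P` and `n ∈ ℕ`. -/
def OmegaClosed (P : Set ℕ) : Prop :=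
  ∀ p₁ ∈ P, ∀ p₂ ∈ P, ∀ n : ℕ, max p₁ (p₂ - n) ∈ P

/-- The multiplication of the semigroup `B_ω^𝓕` on triples `(i, j, p)`:
`(i₁,j₁,p₁)·(i₂,j₂,p₂) = (i₁ + (i₂ ∸ j₁), j₂ + (j₁ ∸ i₂), max (p₁ ∸ (i₂ ∸ j₁)) (p₂ ∸ (j₁ ∸ i₂)))`
(the third coordinate records `(j₁ - i₂ + [p₁)) ∩ [p₂)` etc.). -/
def bmul (x y : ℕ × ℕ × ℕ) : ℕ × ℕ × ℕ :=
  (x.1 + (y.1 - x.2.1), y.2.1 + (x.2.1 - y.1),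
    max (x.2.2 - (y.1 - x.2.1)) (y.2.2 - (x.2.1 - y.1)))

/-- The carrier of `B_ω^𝓕`: triples whose third coordinate lies in `P`. -/
def BF (P : Set ℕ) : Set (ℕ × ℕ × ℕ) := {x | x.2.2 ∈ P}

/-- `ε` is an endomorphism of the semigroup `B_ω^𝓕`. -/
def IsEndo (P : Set ℕ) (ε : ℕ × ℕ × ℕ → ℕ × ℕ × ℕ) : Prop :=
  (∀ x ∈ BF P, ε x ∈ BF P) ∧
    ∀ x ∈ BF P, ∀ y ∈ BF P, ε (bmul x y) = bmul (ε x) (ε y)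

/-!
The automorphism fixes the identity `(0,0,0)`, hence maps the pair `a = (0,1,0)`, `b = (1,0,0)`
with `a·b = (0,0,0)` to a pair of the same shape `(0,n,0)`, `(n,0,0)`; surjectivity forces
`n = 1`, so all powers `(0,m,0)`, `(m,0,0)` are fixed. The idempotents `(0,0,p)` are fixed by
induction on `p`, since conjugating by `a` and `b` lowers `p` by one, and the remaining candidate
images are ruled out by injectivity. Every element is `(i,0,0)·(0,0,p)·(0,j,0)`.
-/

lemma bmul_mk (i₁ j₁ p₁ i₂ j₂ p₂ : ℕ) :
    bmul (i₁, j₁, p₁) (i₂, j₂, p₂)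
      = (i₁ + (i₂ - j₁), j₂ + (j₁ - i₂), max (p₁ - (i₂ - j₁)) (p₂ - (j₁ - i₂))) :=
  rfl

namespace OmegaClosed

variable {P : Set ℕ}

lemma sub_mem (hP : OmegaClosed P) (h0 : 0 ∈ P) {p : ℕ} (hp : p ∈ P) (n : ℕ) :
    p - n ∈ P := by
  simpa using hP 0 h0 p hp n

lemma bmul_mem (hP : OmegaClosed P) (h0 : 0 ∈ P) {x y : ℕ × ℕ × ℕ} (hx : x ∈ BF P)
    (hy : y ∈ BF P) : bmul x y ∈ BF P :=
  hP _ (hP.sub_mem h0 hx _) _ hy _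

end OmegaClosed

section Multiplication

lemma zero_bmul (x : ℕ × ℕ × ℕ) : bmul (0, 0, 0) x = x := by
  obtain ⟨i, j, p⟩ := x
  simp only [bmul_mk, Prod.mk.injEq]
  omega

lemma bmul_zero (x : ℕ × ℕ × ℕ) : bmul x (0, 0, 0) = x := by
  obtain ⟨i, j, p⟩ := x
  simp only [bmul_mk, Prod.mk.injEq]
  omega

lemma eq_of_bmul_eq_zero {i j p i' j' p' : ℕ} (h : bmul (i, j, p) (i', j', p') = (0, 0, 0)) :
    i = 0 ∧ p = 0 ∧ i' = j ∧ j' = 0 ∧ p' = 0 := by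
  simp only [bmul_mk, Prod.mk.injEq] at h
  omega

lemma eq_of_bmul_self {i j p : ℕ} (h : bmul (i, j, p) (i, j, p) = (i, j, p)) : i = j := by
  simp only [bmul_mk, Prod.mk.injEq] at h
  omega

lemma bmul_zero_zero_self (p : ℕ) : bmul (0, 0, p) (0, 0, p) = (0, 0, p) := by
  simp [bmul_mk]

lemma bmul_zero_nat_zero (a b : ℕ) : bmul (0, a, 0) (0, b, 0) = (0, b + a, 0) := by
  simp only [bmul_mk, Prod.mk.injEq]
  omega

lemma bmul_nat_zero_zero (a b : ℕ) : bmul (a, 0, 0) (b, 0, 0) = (a + b, 0, 0) := by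
  simp only [bmul_mk, Prod.mk.injEq]
  omega

lemma bmul_bmul_conj_down (k q : ℕ) :
    bmul (bmul (0, 1, 0) (k, k, q)) (1, 0, 0) = (k - 1, k - 1, q - (1 - k)) := by
  simp only [bmul_mk, Prod.mk.injEq]
  omega

lemma bmul_bmul_conj_up (k q : ℕ) :
    bmul (bmul (1, 0, 0) (k, k, q)) (0, 1, 0) = (k + 1, k + 1, q) := by
  simp only [bmul_mk, Prod.mk.injEq]
  omega

lemma bmul_bmul_decomp (i j p : ℕ) : bmul (bmul (i, 0, 0) (0, 0, p)) (0, j, 0) = (i, j, p) := by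
  simp only [bmul_mk, Prod.mk.injEq]
  omega

end Multiplication

section Endomorphism

variable {P : Set ℕ} {ε : ℕ × ℕ × ℕ → ℕ × ℕ × ℕ}

lemma map_zero_of_surjOn (h0 : 0 ∈ P) (hsurj : Set.SurjOn ε (BF P) (BF P))
    (hmul : ∀ x ∈ BF P, ∀ y ∈ BF P, ε (bmul x y) = bmul (ε x) (ε y)) :
    ε (0, 0, 0) = (0, 0, 0) := by
  obtain ⟨x, hx, hex⟩ := hsurj (show ((0 : ℕ), (0 : ℕ), (0 : ℕ)) ∈ BF P from h0)
  simpa [zero_bmul, hex, bmul_zero] using (hmul (0, 0, 0) h0 x hx).symm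

lemma exists_map_generators (h0 : 0 ∈ P)
    (hmul : ∀ x ∈ BF P, ∀ y ∈ BF P, ε (bmul x y) = bmul (ε x) (ε y))
    (he : ε (0, 0, 0) = (0, 0, 0)) :
    ∃ n, ε (0, 1, 0) = (0, n, 0) ∧ ε (1, 0, 0) = (n, 0, 0) := by
  have hab : bmul (ε (0, 1, 0)) (ε (1, 0, 0)) = (0, 0, 0) := by
    rw [← hmul _ h0 _ h0, ← he]
    rfl
  rcases ha : ε (0, 1, 0) with ⟨i, n, p⟩
  rcases hb : ε (1, 0, 0) with ⟨i', j', p'⟩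
  rw [ha, hb] at hab
  obtain ⟨rfl, rfl, rfl, rfl, rfl⟩ := eq_of_bmul_eq_zero hab
  exact ⟨_, rfl, rfl⟩

lemma map_zero_nat_zero (h0 : 0 ∈ P)
    (hmul : ∀ x ∈ BF P, ∀ y ∈ BF P, ε (bmul x y) = bmul (ε x) (ε y))
    (he : ε (0, 0, 0) = (0, 0, 0)) {n : ℕ} (ha : ε (0, 1, 0) = (0, n, 0)) (m : ℕ) :
    ε (0, m, 0) = (0, n * m, 0) := by
  induction m with
  | zero => exact he
  | succ k ih =>
    rw [← bmul_zero_nat_zero 1 k, hmul _ h0 _ h0, ha, ih, bmul_zero_nat_zero, Nat.mul_succ]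

lemma map_nat_zero_zero (h0 : 0 ∈ P)
    (hmul : ∀ x ∈ BF P, ∀ y ∈ BF P, ε (bmul x y) = bmul (ε x) (ε y))
    (he : ε (0, 0, 0) = (0, 0, 0)) {n : ℕ} (hb : ε (1, 0, 0) = (n, 0, 0)) (m : ℕ) :
    ε (m, 0, 0) = (n * m, 0, 0) := by
  induction m with
  | zero => exact he
  | succ k ih =>
    rw [← bmul_nat_zero_zero k 1, hmul _ h0 _ h0, ih, hb, bmul_nat_zero_zero, Nat.mul_succ]

lemma eq_one_of_map_generators (hP : OmegaClosed P) (h0 : 0 ∈ P)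
    (hbij : Set.BijOn ε (BF P) (BF P))
    (hmul : ∀ x ∈ BF P, ∀ y ∈ BF P, ε (bmul x y) = bmul (ε x) (ε y))
    (he : ε (0, 0, 0) = (0, 0, 0)) {n : ℕ} (ha : ε (0, 1, 0) = (0, n, 0)) : n = 1 := by
  obtain ⟨⟨i, m, p⟩, hx, hex⟩ :=
    hbij.surjOn (show ((0 : ℕ), (1 : ℕ), (0 : ℕ)) ∈ BF P from h0)
  obtain ⟨⟨i', j', p'⟩, hy, hey⟩ :=
    hbij.surjOn (show ((1 : ℕ), (0 : ℕ), (0 : ℕ)) ∈ BF P from h0)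
  have hxy : bmul (i, m, p) (i', j', p') = (0, 0, 0) := by
    refine hbij.injOn (hP.bmul_mem h0 hx hy) h0 ?_
    rw [hmul _ hx _ hy, hex, hey, he]
    rfl
  obtain ⟨rfl, rfl, -⟩ := eq_of_bmul_eq_zero hxy
  rw [map_zero_nat_zero h0 hmul he ha, Prod.mk.injEq, Prod.mk.injEq] at hex
  exact Nat.eq_one_of_mul_eq_one_right hex.2.1

lemma map_zero_zero_nat (hP : OmegaClosed P) (h0 : 0 ∈ P) (hinj : Set.InjOn ε (BF P))
    (hmul : ∀ x ∈ BF P, ∀ y ∈ BF P, ε (bmul x y) = bmul (ε x) (ε y))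
    (he : ε (0, 0, 0) = (0, 0, 0)) (ha : ε (0, 1, 0) = (0, 1, 0))
    (hb : ε (1, 0, 0) = (1, 0, 0)) {p : ℕ} (hp : p ∈ P) : ε (0, 0, p) = (0, 0, p) := by
  induction p using Nat.strong_induction_on with
  | _ p ih =>
    rcases Nat.eq_zero_or_pos p with rfl | hpos
    · exact he
    have hp' : p - 1 ∈ P := hP.sub_mem h0 hp 1
    have ih' : ε (0, 0, p - 1) = (0, 0, p - 1) := ih (p - 1) (by omega) hp'
    obtain ⟨⟨k, k', q⟩, hf⟩ : ∃ f, ε (0, 0, p) = f := ⟨_, rfl⟩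
    obtain rfl : k = k' :=
      eq_of_bmul_self (by rw [← hf, ← hmul _ hp _ hp, bmul_zero_zero_self])
    have hdown : (k - 1, k - 1, q - (1 - k)) = (0, 0, p - 1) := by
      rw [← bmul_bmul_conj_down, ← hf, ← ha, ← hb, ← hmul _ h0 _ hp,
        ← hmul _ (hP.bmul_mem h0 h0 hp) _ h0, bmul_bmul_conj_down, ih']
    have hup : ε (1, 1, p - 1) = (1, 1, p - 1) := by
      rw [← bmul_bmul_conj_up, hmul _ (hP.bmul_mem h0 h0 hp') _ h0, hmul _ h0 _ hp', ha, hb, ih']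
    simp only [Prod.mk.injEq] at hdown
    rcases (by omega : (k = 0 ∧ q = p) ∨ (k = 0 ∧ q = 0) ∨ (k = 1 ∧ q = p - 1)) with
      ⟨rfl, rfl⟩ | ⟨rfl, rfl⟩ | ⟨rfl, rfl⟩
    · exact hf
    · have := hinj hp h0 (hf.trans he.symm)
      simp only [Prod.mk.injEq] at this
      omega
    · have := hinj hp hp' (hf.trans hup.symm)
      simp only [Prod.mk.injEq] at this
      omega

end Endomorphism

theorem automorphism_is_identity_general (P : Set ℕ) (hP : OmegaClosed P) (h0 : 0 ∈ P)
    (ε : ℕ × ℕ × ℕ → ℕ × ℕ × ℕ)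
    (hbij : Set.BijOn ε (BF P) (BF P))
    (hmul : ∀ x ∈ BF P, ∀ y ∈ BF P, ε (bmul x y) = bmul (ε x) (ε y)) :
    ∀ x ∈ BF P, ε x = x := by
  have he := map_zero_of_surjOn h0 hbij.surjOn hmul
  obtain ⟨n, ha, hb⟩ := exists_map_generators h0 hmul he
  obtain rfl := eq_one_of_map_generators hP h0 hbij hmul he ha
  rintro ⟨i, j, p⟩ hp
  have hp' : ((0 : ℕ), (0 : ℕ), p) ∈ BF P := hp
  have hi : ε (i, 0, 0) = (i, 0, 0) := by rw [map_nat_zero_zero h0 hmul he hb, one_mul]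
  have hj : ε (0, j, 0) = (0, j, 0) := by rw [map_zero_nat_zero h0 hmul he ha, one_mul]
  rw [← bmul_bmul_decomp, hmul _ (hP.bmul_mem h0 h0 hp') _ h0, hmul _ h0 _ hp', hi, hj,
    map_zero_zero_nat hP h0 hbij.injOn hmul he ha hb hp]

/-- Every automorphism (bijective endomorphism) of `B_ω^𝓕` (`P` ω-closed, `0 ∈ P`,
`P` with at least two elements) is the identity map. -/
theorem automorphism_is_identity (P : Set ℕ) (hP : OmegaClosed P) (h0 : 0 ∈ P)
    (hP2 : P.Nontrivial) (ε : ℕ × ℕ × ℕ → ℕ × ℕ × ℕ)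
    (hbij : Set.BijOn ε (BF P) (BF P))
    (hmul : ∀ x ∈ BF P, ∀ y ∈ BF P, ε (bmul x y) = bmul (ε x) (ε y)) :
    ∀ x ∈ BF P, ε x = x :=
  automorphism_is_identity_general P hP h0 ε hbij hmul
end

section
/- Let P ⊆ ℕ be ω-closed with 0 ∈ P, let k ∈ ℕ with k + 1 ∈ P, and let ε be an injective endomorphism of the semigroup B_ω^𝓕 (𝓕 = {[p) : p ∈ P}). If ε(m,n,p) = (m,n,p) for all m,n ∈ ℕ and all p ∈ P with p ≤ k, then ε(0,0,k+1) = (0,0,k+1) and ε(1,1,k+1) = (1,1,k+1). (Induction step in the proof of Lemma 2.1.) -/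
/-!
Left multiplication by the fixed idempotent `(1,1,0)` sends `(0,0,k+1)` to `(1,1,k)`, which is
fixed; the only solutions of `(1,1,0)·x = (1,1,k)` are `(0,0,k+1)`, `(1,1,k)` and, when `k = 0`,
`(0,0,0)`, and the last two are excluded by injectivity. Then `(1,1,k+1)`, like every `(m,n,k+1)`,
is the product `(m,0,0)·(0,0,k+1)·(0,n,0)` of fixed elements.
-/

theorem mem_BF_iff {P : Set ℕ} {i j p : ℕ} : (i, j, p) ∈ BF P ↔ p ∈ P := Iff.rfl

theorem OmegaClosed.sub_mem_s13 {P : Set ℕ} (hP : OmegaClosed P) (h0 : 0 ∈ P) {p : ℕ}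
    (hp : p ∈ P) (n : ℕ) : p - n ∈ P := by
  simpa using hP 0 h0 p hp n

theorem bmul_one_one_zero_eq_iff (x : ℕ × ℕ × ℕ) (k : ℕ) :
    bmul (1, 1, 0) x = (1, 1, k) ↔
      x = (0, 0, k + 1) ∨ (x = (0, 0, 0) ∧ k = 0) ∨ x = (1, 1, k) := by
  obtain ⟨a, b, c⟩ := x
  simp only [bmul, Prod.mk.injEq, zero_tsub, zero_max]
  omega

theorem bmul_decomposition (m n p : ℕ) : bmul (bmul (m, 0, 0) (0, 0, p)) (0, n, 0) = (m, n, p) := by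
  simp [bmul]

namespace IsEndo

variable {P : Set ℕ} {ε : ℕ × ℕ × ℕ → ℕ × ℕ × ℕ}

theorem map_zero_zero_succ (hε : IsEndo P ε) (hinj : Set.InjOn ε (BF P)) (h0 : 0 ∈ P)
    {k : ℕ} (hk1 : k + 1 ∈ P) (hk : k ∈ P) (h000 : ε (0, 0, 0) = (0, 0, 0))
    (h110 : ε (1, 1, 0) = (1, 1, 0)) (h11k : ε (1, 1, k) = (1, 1, k)) :
    ε (0, 0, k + 1) = (0, 0, k + 1) := by
  have key : bmul (1, 1, 0) (ε (0, 0, k + 1)) = (1, 1, k) := by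
    rw [← h110, ← hε.2 _ h0 _ hk1, (bmul_one_one_zero_eq_iff _ k).2 (Or.inl rfl), h11k]
  rcases (bmul_one_one_zero_eq_iff _ k).1 key with h | ⟨h, -⟩ | h
  · exact h
  · exact absurd (h.trans h000.symm) (hinj.ne (mem_BF_iff.2 hk1) (mem_BF_iff.2 h0) (by simp))
  · exact absurd (h.trans h11k.symm) (hinj.ne (mem_BF_iff.2 hk1) (mem_BF_iff.2 hk) (by simp))

theorem map_eq_self_of_map_zero_zero (hε : IsEndo P ε) (h0 : 0 ∈ P)
    (hfix0 : ∀ m n : ℕ, ε (m, n, 0) = (m, n, 0)) {p : ℕ} (hp : p ∈ P)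
    (hp0 : ε (0, 0, p) = (0, 0, p)) (m n : ℕ) : ε (m, n, p) = (m, n, p) := by
  have hm : bmul (m, 0, 0) (0, 0, p) ∈ BF P := by simpa [bmul, mem_BF_iff] using hp
  rw [← bmul_decomposition m n p, hε.2 _ hm _ h0, hε.2 _ h0 _ hp, hfix0, hfix0, hp0]

end IsEndo

/-- Induction step in the proof of **Lemma 2.1**: if an injective endomorphism `ε` of
`B_ω^𝓕` (`P` ω-closed, `0 ∈ P`, `k + 1 ∈ P`) fixes `(m,n,p)` for all `m, n ∈ ℕ` and all
`p ∈ P` with `p ≤ k`, then it fixes `(0,0,k+1)` and `(1,1,k+1)`. -/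
theorem endo_fixes_next_level (P : Set ℕ) (hP : OmegaClosed P) (h0 : 0 ∈ P)
    (k : ℕ) (hk1 : k + 1 ∈ P)
    (ε : ℕ × ℕ × ℕ → ℕ × ℕ × ℕ) (hend : IsEndo P ε) (hinj : Set.InjOn ε (BF P))
    (hfix : ∀ m n : ℕ, ∀ p ∈ P, p ≤ k → ε (m, n, p) = (m, n, p)) :
    ε (0, 0, k + 1) = (0, 0, k + 1) ∧ ε (1, 1, k + 1) = (1, 1, k + 1) := by
  have hk : k ∈ P := by simpa using hP.sub_mem_s13 h0 hk1 1
  have hfix0 : ∀ m n : ℕ, ε (m, n, 0) = (m, n, 0) := fun m n => hfix m n 0 h0 k.zero_le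
  have hk1_fixed : ε (0, 0, k + 1) = (0, 0, k + 1) :=
    hend.map_zero_zero_succ hinj h0 hk1 hk (hfix0 0 0) (hfix0 1 1) (hfix 1 1 k hk le_rfl)
  exact ⟨hk1_fixed, hend.map_eq_self_of_map_zero_zero h0 hfix0 hk1 hk1_fixed 1 1⟩
end
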